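/- arXiv:2605.14254 — 2 statements merged into one kernel-verified Lean document; each statement's English description precedes it below -/
import Mathlib

section
/- For λ > 0 and any real c ≥ 0, λ·√(2/π)·exp(λz) · ∫_0^∞ exp(−(c+z)²/(2r²) − λ²r²/2) dr = exp(−λ·c), where z > 0. In particular, taking c = y ≥ 0 gives that ∫_0^∞ exp(−(y²+2yz)/(2r)) p(r,z,λr) dr = exp(−λy)/λ. -/
open MeasureTheory Real

/-- Gaussian density with variance `t` and mean `m`, evaluated at `x`. -/
noncomputable def gaussDensity (t x m : ℝ) : ℝ :=
  Real.exp (-(x - m) ^ 2 / (2 * t)) / Real.sqrt (2 * Real.pi * t)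

open Set

/-! The substitution `u = b r - a / r` maps `(0, ∞)` bijectively onto `ℝ` with Jacobian
`b + a / r²`, and the involution `r ↦ a / (b r)` turns the `a / r²` part of the Jacobian into `b`
times the reflected integrand. This is the Cauchy–Schlömilch identity
`∫₀^∞ (f (b r - a / r) + f (a / r - b r)) dr = b⁻¹ ∫ f`; for the Gaussian it gives
`∫₀^∞ exp (-a² / (2 r²) - b² r² / 2) dr = √(2π) / (2 b) · exp (-a b)`, the first claim with
`a = c + z`, `b = λ`. The second claim reduces to the first under `r = s²`. -/

variable {E : Type*} [NormedAddCommGroup E] [NormedSpace ℝ E]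

theorem integral_Ioi_comp_sq (g : ℝ → E) :
    ∫ s in Ioi 0, (2 * s) • g (s ^ 2) = ∫ r in Ioi 0, g r := by
  have h := integral_comp_rpow_Ioi_of_pos (g := g) two_pos
  norm_num at h
  exact h

section Inversion

variable {c : ℝ}

theorem injOn_const_div_Ioi (hc : 0 < c) : InjOn (fun r => c / r) (Ioi 0) := fun r _ s _ h => by
  simpa only [div_div_cancel₀ hc.ne'] using congrArg (c / ·) h

theorem image_const_div_Ioi (hc : 0 < c) : (fun r => c / r) '' Ioi 0 = Ioi 0 := by
  refine Subset.antisymm (image_subset_iff.2 fun r hr => div_pos hc hr) fun r hr => ?_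
  exact ⟨c / r, div_pos hc hr, div_div_cancel₀ hc.ne'⟩

theorem hasDerivWithinAt_const_div_Ioi {r : ℝ} (hr : r ∈ Ioi 0) :
    HasDerivWithinAt (fun r => c / r) (-(c / r ^ 2)) (Ioi 0) r := by
  have h := (hasDerivAt_const r c).fun_div (hasDerivAt_id' r) (ne_of_gt hr)
  exact h.hasDerivWithinAt.congr_deriv (by ring)

theorem integrableOn_Ioi_comp_const_div_iff (hc : 0 < c) (g : ℝ → E) :
    IntegrableOn (fun r => (c / r ^ 2) • g (c / r)) (Ioi 0) ↔ IntegrableOn g (Ioi 0) := by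
  have h := integrableOn_image_iff_integrableOn_abs_deriv_smul measurableSet_Ioi
    (fun _ => hasDerivWithinAt_const_div_Ioi) (injOn_const_div_Ioi hc) g
  rw [image_const_div_Ioi hc] at h
  rw [h]
  refine integrableOn_congr_fun (fun r _ => ?_) measurableSet_Ioi
  simp only [abs_neg, abs_of_nonneg (div_nonneg hc.le (sq_nonneg r))]

theorem integral_Ioi_comp_const_div (hc : 0 < c) (g : ℝ → E) :
    ∫ r in Ioi 0, (c / r ^ 2) • g (c / r) = ∫ r in Ioi 0, g r := by
  have h := integral_image_eq_integral_abs_deriv_smul measurableSet_Ioi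
    (fun _ => hasDerivWithinAt_const_div_Ioi) (injOn_const_div_Ioi hc) g
  rw [image_const_div_Ioi hc] at h
  rw [h]
  congr 1 with r
  simp only [abs_neg, abs_of_nonneg (div_nonneg hc.le (sq_nonneg r))]

end Inversion

section CauchySchlomilch

variable {a b : ℝ}

theorem hasDerivAt_mul_sub_div {r : ℝ} (hr : r ≠ 0) :
    HasDerivAt (fun r => b * r - a / r) (b + a / r ^ 2) r := by
  have h := ((hasDerivAt_id' r).const_mul b).fun_sub
    ((hasDerivAt_const r a).fun_div (hasDerivAt_id' r) hr)
  exact h.congr_deriv (by field_simp; ring)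

theorem strictMonoOn_mul_sub_div (ha : 0 < a) (hb : 0 < b) :
    StrictMonoOn (fun r => b * r - a / r) (Ioi 0) := fun r hr s hs hrs => by
  have : a / s < a / r := div_lt_div_of_pos_left ha hr hrs
  have : b * r < b * s := mul_lt_mul_of_pos_left hrs hb
  simp only
  linarith

theorem image_mul_sub_div_Ioi (ha : 0 < a) (hb : 0 < b) :
    (fun r => b * r - a / r) '' Ioi 0 = univ := by
  refine eq_univ_of_forall fun u => ?_
  -- the positive root of `b r² - u r - a = 0`
  obtain ⟨s, hs0, hs2⟩ : ∃ s, 0 ≤ s ∧ s ^ 2 = u ^ 2 + 4 * a * b :=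
    ⟨_, sqrt_nonneg _, sq_sqrt (by positivity)⟩
  have hus : 0 < u + s := by nlinarith [neg_le_abs u, sq_abs u, abs_nonneg u]
  refine ⟨(u + s) / (2 * b), div_pos hus (by positivity), ?_⟩
  field_simp
  linear_combination hs2

variable {f : ℝ → E}

theorem integral_Ioi_comp_mul_sub_div_add (ha : 0 < a) (hb : 0 < b) (hf : Integrable f) :
    ∫ r in Ioi 0, (f (b * r - a / r) + f (a / r - b * r)) = b⁻¹ • ∫ u, f u := by
  set φ : ℝ → ℝ := fun r => b * r - a / r with hφ
  have hφ' : ∀ r ∈ Ioi (0 : ℝ), HasDerivWithinAt φ (b + a / r ^ 2) (Ioi 0) r :=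
    fun r hr => (hasDerivAt_mul_sub_div (ne_of_gt hr)).hasDerivWithinAt
  have hinj := (strictMonoOn_mul_sub_div ha hb).injOn
  have himg : φ '' Ioi 0 = univ := image_mul_sub_div_Ioi ha hb
  have habs : ∀ r : ℝ, |b + a / r ^ 2| = b + a / r ^ 2 := fun r => abs_of_pos (by positivity)
  have hJ_int : IntegrableOn (fun r => (b + a / r ^ 2) • f (φ r)) (Ioi 0) := by
    have := integrableOn_image_iff_integrableOn_abs_deriv_smul measurableSet_Ioi hφ' hinj f
    rw [himg, integrableOn_univ] at this
    simpa only [habs] using this.1 hf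
  have hJ_eq : ∫ u, f u = ∫ r in Ioi 0, (b + a / r ^ 2) • f (φ r) := by
    have := integral_image_eq_integral_abs_deriv_smul measurableSet_Ioi hφ' hinj f
    simpa only [himg, Measure.restrict_univ, habs] using this
  have hφ_int : IntegrableOn (fun r => f (φ r)) (Ioi 0) := by
    have := hJ_int.bdd_smul b⁻¹ (φ := fun r => (b + a / r ^ 2)⁻¹)
      (by fun_prop : Measurable _).aestronglyMeasurable ?_
    · refine this.congr (ae_of_all _ fun r => ?_)
      exact inv_smul_smul₀ (by positivity) _
    · refine ae_of_all _ fun r => ?_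
      rw [norm_inv, Real.norm_of_nonneg (by positivity)]
      exact inv_anti₀ hb (by simp; positivity)
  have hreflect : ∀ r, a / (a / b / r) - b * (a / b / r) = φ r := by
    intro r
    rcases eq_or_ne r 0 with rfl | hr
    · simp [hφ]
    · simp only [hφ]
      field_simp
  have hsplit : ∀ r (x : E), b⁻¹ • (b + a / r ^ 2) • x = x + (a / b / r ^ 2) • x := by
    intro r x
    rw [smul_smul, show b⁻¹ * (b + a / r ^ 2) = 1 + a / b / r ^ 2 by field_simp, add_smul,
      one_smul]
  have hψ_int : IntegrableOn (fun r => (a / b / r ^ 2) • f (φ r)) (Ioi 0) := by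
    refine ((hJ_int.smul b⁻¹).sub hφ_int).congr (ae_of_all _ fun r => ?_)
    simp only [Pi.sub_apply, Pi.smul_apply, hsplit, add_sub_cancel_left]
  have hψ_int' : IntegrableOn (fun r => f (a / r - b * r)) (Ioi 0) := by
    rw [← integrableOn_Ioi_comp_const_div_iff (div_pos ha hb)]
    simpa only [hreflect] using hψ_int
  have hψ_eq : ∫ r in Ioi 0, f (a / r - b * r) = ∫ r in Ioi 0, (a / b / r ^ 2) • f (φ r) := by
    rw [← integral_Ioi_comp_const_div (div_pos ha hb)]
    simp only [hreflect]
  calc ∫ r in Ioi 0, (f (φ r) + f (a / r - b * r))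
      = ∫ r in Ioi 0, (f (φ r) + (a / b / r ^ 2) • f (φ r)) := by
        rw [integral_add hφ_int hψ_int', hψ_eq, integral_add hφ_int hψ_int]
    _ = b⁻¹ • ∫ u, f u := by
        simp only [← hsplit, integral_smul, hJ_eq]

end CauchySchlomilch

theorem integral_Ioi_exp_neg_sq_mul_sub_div {a b : ℝ} (ha : 0 < a) (hb : 0 < b) :
    ∫ r in Ioi 0, exp (-(b * r - a / r) ^ 2 / 2) = √(2 * π) / (2 * b) := by
  have hstd : (fun u : ℝ => exp (-u ^ 2 / 2)) = fun u => exp (-(1 / 2) * u ^ 2) := by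
    ext u
    ring_nf
  have hf : Integrable fun u : ℝ => exp (-u ^ 2 / 2) :=
    hstd ▸ integrable_exp_neg_mul_sq (by norm_num)
  have hgauss : ∫ u : ℝ, exp (-u ^ 2 / 2) = √(2 * π) := by
    rw [hstd, integral_gaussian]
    ring_nf
  have h := integral_Ioi_comp_mul_sub_div_add ha hb hf
  simp only [← neg_sub (b * _), neg_sq, ← two_mul, integral_const_mul, hgauss, smul_eq_mul,
    eq_inv_mul_iff_mul_eq₀ hb.ne'] at h
  rw [eq_div_iff (by positivity), ← h]
  ring

theorem integral_Ioi_exp_neg_div_sq_sub_mul_sq {a b : ℝ} (ha : 0 < a) (hb : 0 < b) :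
    ∫ r in Ioi 0, exp (-a ^ 2 / (2 * r ^ 2) - b ^ 2 * r ^ 2 / 2) =
      √(2 * π) / (2 * b) * exp (-(a * b)) := by
  have hsq : ∀ r ∈ Ioi (0 : ℝ), exp (-a ^ 2 / (2 * r ^ 2) - b ^ 2 * r ^ 2 / 2) =
      exp (-(a * b)) * exp (-(b * r - a / r) ^ 2 / 2) := fun r hr => by
    rw [← exp_add]
    congr 1
    field_simp [(mem_Ioi.1 hr).ne']
    ring
  rw [setIntegral_congr_fun measurableSet_Ioi hsq, integral_const_mul,
    integral_Ioi_exp_neg_sq_mul_sub_div ha hb, mul_comm]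

theorem sqrt_two_div_pi_eq_two_div_sqrt : √(2 / π) = 2 / √(2 * π) := by
  rw [eq_div_iff (by positivity), ← sqrt_mul (by positivity),
    show 2 / π * (2 * π) = 2 ^ 2 by field_simp, sqrt_sq zero_le_two]

theorem two_mul_mul_exp_mul_gaussDensity_sq (y z lam : ℝ) {s : ℝ} (hs : 0 < s) :
    2 * s * (exp (-(y ^ 2 + 2 * y * z) / (2 * s ^ 2)) * gaussDensity (s ^ 2) z (lam * s ^ 2)) =
      √(2 / π) * exp (lam * z) * exp (-(y + z) ^ 2 / (2 * s ^ 2) - lam ^ 2 * s ^ 2 / 2) := by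
  have hsqrt : √(2 * π * s ^ 2) = √(2 * π) * s := by
    rw [sqrt_mul (by positivity), sqrt_sq hs.le]
  have hexp : exp (-(y ^ 2 + 2 * y * z) / (2 * s ^ 2)) * exp (-(z - lam * s ^ 2) ^ 2 / (2 * s ^ 2))
      = exp (lam * z) * exp (-(y + z) ^ 2 / (2 * s ^ 2) - lam ^ 2 * s ^ 2 / 2) := by
    rw [← exp_add, ← exp_add]
    congr 1
    field_simp
    ring
  rw [gaussDensity, hsqrt, sqrt_two_div_pi_eq_two_div_sqrt, mul_assoc _ (exp _), ← hexp]
  field_simp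

theorem stmt_2 (lam z : ℝ) (hlam : 0 < lam) (hz : 0 < z) :
    (∀ c : ℝ, 0 ≤ c →
      lam * Real.sqrt (2 / Real.pi) * Real.exp (lam * z) *
          ∫ r in Set.Ioi (0 : ℝ),
            Real.exp (-(c + z) ^ 2 / (2 * r ^ 2) - lam ^ 2 * r ^ 2 / 2) =
        Real.exp (-lam * c)) ∧
    (∀ y : ℝ, 0 ≤ y →
      ∫ r in Set.Ioi (0 : ℝ),
          Real.exp (-(y ^ 2 + 2 * y * z) / (2 * r)) * gaussDensity r z (lam * r) =
        Real.exp (-lam * y) / lam) := by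
  have first_claim : ∀ c : ℝ, 0 ≤ c →
      lam * √(2 / π) * exp (lam * z) *
          ∫ r in Ioi 0, exp (-(c + z) ^ 2 / (2 * r ^ 2) - lam ^ 2 * r ^ 2 / 2) =
        exp (-lam * c) := fun c hc => by
    rw [integral_Ioi_exp_neg_div_sq_sub_mul_sq (by linarith) hlam, sqrt_two_div_pi_eq_two_div_sqrt,
      show -lam * c = lam * z + -((c + z) * lam) by ring, exp_add]
    field_simp
  refine ⟨first_claim, fun y hy => ?_⟩
  rw [← integral_Ioi_comp_sq]
  simp only [smul_eq_mul]
  rw [setIntegral_congr_fun measurableSet_Ioi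
    fun s hs => two_mul_mul_exp_mul_gaussDensity_sq y z lam hs, integral_const_mul,
    eq_div_iff hlam.ne']
  linear_combination first_claim y hy
end

section
/- For λ > 0, s ≥ 0 and any real x, the improper integral ∫_s^∞ p(r−s, x, λ(r−s)) dr equals (1/λ)·exp(−λ(|x|−x)), where p(u, x, m) = (2πu)^{-1/2}·exp(−(x−m)²/(2u)). -/
open MeasureTheory Real

/-!
Write `φ = gaussDensity 1 · 0` and `N y = ∫₀ʸ φ`. For `u > 0` the integrand `p(u, x, λu)` has the
explicit primitive `F (√u)`, where `F v = (N (λv - x/v) - e^{2λx} N (-λv - x/v)) / λ`: the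
derivative of `F` collapses to `2 φ (λv - x/v)` because `e^{2λx} φ (-λv - x/v) = φ (λv - x/v)`.
Since the integrand is nonnegative, the integral is `F (∞) - F (0⁺)`. Now `N → ±1/2` at `±∞`,
so `F (∞) = (1 + e^{2λx}) / (2λ)`, while as `v → 0⁺` both arguments `±λv - x/v` tend to
`-sign x · ∞`, giving `F (0⁺) = sign x · (e^{2λx} - 1) / (2λ)`. The difference is
`min (1, e^{2λx}) / λ = e^{-λ(|x| - x)} / λ`.
-/

open Set Filter Topology

theorem integral_Ioi_of_hasDerivAt_of_nonneg_of_tendsto {g g' : ℝ → ℝ} {a l₀ l : ℝ}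
    (hderiv : ∀ x ∈ Ioi a, HasDerivAt g (g' x) x) (g'pos : ∀ x ∈ Ioi a, 0 ≤ g' x)
    (ha : Tendsto g (𝓝[>] a) (𝓝 l₀)) (hg : Tendsto g atTop (𝓝 l)) :
    ∫ x in Ioi a, g' x = l - l₀ := by
  classical
  set G := Function.update g a l₀
  have hGa : G a = l₀ := Function.update_self ..
  have hG : ∀ x ∈ Ioi a, G x = g x := fun x hx => Function.update_of_ne (ne_of_gt hx) _ _
  have hcont : ContinuousWithinAt G (Ici a) a := by
    rw [← Ioi_insert, continuousWithinAt_insert_self, ContinuousWithinAt, hGa]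
    exact ha.congr' (eventually_nhdsWithin_of_forall fun x hx => (hG x hx).symm)
  have hderivG : ∀ x ∈ Ioi a, HasDerivAt G (g' x) x := fun x hx =>
    (hderiv x hx).congr_of_eventuallyEq
      (eventually_of_mem (isOpen_Ioi.mem_nhds hx) hG)
  have hgG : Tendsto G atTop (𝓝 l) :=
    hg.congr' (eventually_gt_atTop a |>.mono fun x hx => (hG x hx).symm)
  rw [integral_Ioi_of_hasDerivAt_of_nonneg hcont hderivG g'pos hgG, hGa]

/-- `Φ - 1/2`, for `Φ` the standard normal distribution function. -/
noncomputable def normalIntegral (y : ℝ) : ℝ := ∫ t in (0 : ℝ)..y, gaussDensity 1 t 0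

lemma gaussDensity_one_zero (t : ℝ) :
    gaussDensity 1 t 0 = exp (-(1 / 2) * t ^ 2) / √(2 * π) := by
  simp only [gaussDensity, sub_zero, mul_one]
  ring_nf

lemma continuous_gaussDensity_one_zero : Continuous fun t => gaussDensity 1 t 0 := by
  simp only [gaussDensity_one_zero]
  fun_prop

lemma integrable_gaussDensity_one_zero : Integrable fun t => gaussDensity 1 t 0 := by
  simp only [gaussDensity_one_zero]
  exact (integrable_exp_neg_mul_sq (by norm_num)).div_const _

lemma integral_Ioi_gaussDensity_one_zero : ∫ t in Ioi 0, gaussDensity 1 t 0 = 1 / 2 := by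
  simp only [gaussDensity_one_zero]
  rw [integral_div, integral_gaussian_Ioi, show π / (1 / 2) = 2 * π by ring]
  have : 0 < √(2 * π) := by positivity
  field_simp

lemma hasDerivAt_normalIntegral (y : ℝ) : HasDerivAt normalIntegral (gaussDensity 1 y 0) y :=
  (continuous_gaussDensity_one_zero.integral_hasStrictDerivAt 0 y).hasDerivAt

lemma continuous_normalIntegral : Continuous normalIntegral :=
  continuous_iff_continuousAt.2 fun y => (hasDerivAt_normalIntegral y).continuousAt

lemma gaussDensity_one_neg_zero (t : ℝ) : gaussDensity 1 (-t) 0 = gaussDensity 1 t 0 := by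
  simp only [gaussDensity_one_zero, neg_sq]

lemma normalIntegral_neg (y : ℝ) : normalIntegral (-y) = -normalIntegral y := by
  have h := intervalIntegral.integral_comp_neg (a := 0) (b := y) fun t => gaussDensity 1 t 0
  simp only [gaussDensity_one_neg_zero, neg_zero] at h
  rw [normalIntegral, normalIntegral, intervalIntegral.integral_symm, h]

lemma tendsto_normalIntegral_atTop : Tendsto normalIntegral atTop (𝓝 (1 / 2)) := by
  rw [← integral_Ioi_gaussDensity_one_zero]
  exact intervalIntegral_tendsto_integral_Ioi 0 integrable_gaussDensity_one_zero.integrableOn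
    tendsto_id

lemma tendsto_normalIntegral_atBot : Tendsto normalIntegral atBot (𝓝 (-(1 / 2))) := by
  have h := (tendsto_normalIntegral_atTop.comp tendsto_neg_atBot_atTop).neg
  simpa only [Function.comp_def, normalIntegral_neg, neg_neg] using h

lemma tendsto_normalIntegral_mul_sub_div_nhdsGT_zero (c x : ℝ) :
    Tendsto (fun v => normalIntegral (c * v - x / v)) (𝓝[>] 0) (𝓝 (-Real.sign x / 2)) := by
  have hcv : Tendsto (fun v : ℝ => c * v) (𝓝[>] 0) (𝓝 0) := by
    simpa using ((continuous_const_mul c).tendsto 0).mono_left nhdsWithin_le_nhds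
  have hdiv : ∀ v : ℝ, c * v - x / v = c * v + -x * v⁻¹ := fun v => by ring
  simp only [hdiv]
  rcases lt_trichotomy x 0 with hx | rfl | hx
  · rw [Real.sign_of_neg hx, show -(-1 : ℝ) / 2 = 1 / 2 by norm_num]
    exact tendsto_normalIntegral_atTop.comp
      (hcv.add_atTop (tendsto_inv_nhdsGT_zero.const_mul_atTop (neg_pos.2 hx)))
  · have h0 : normalIntegral 0 = 0 := intervalIntegral.integral_same
    simpa [h0, Function.comp_def] using (continuous_normalIntegral.tendsto 0).comp hcv
  · rw [Real.sign_of_pos hx, neg_div]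
    exact tendsto_normalIntegral_atBot.comp
      (hcv.add_atBot (tendsto_inv_nhdsGT_zero.const_mul_atTop_of_neg (neg_neg_iff_pos.2 hx)))

noncomputable def driftPrimitive (lam x v : ℝ) : ℝ :=
  (normalIntegral (lam * v - x / v) - exp (2 * lam * x) * normalIntegral (-lam * v - x / v)) / lam

lemma exp_mul_gaussDensity_reflect (lam x : ℝ) {v : ℝ} (hv : v ≠ 0) :
    exp (2 * lam * x) * gaussDensity 1 (-lam * v - x / v) 0 =
      gaussDensity 1 (lam * v - x / v) 0 := by
  rw [gaussDensity_one_zero, gaussDensity_one_zero, ← mul_div_assoc, ← exp_add]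
  congr 2
  field_simp
  ring

lemma hasDerivAt_driftPrimitive {lam : ℝ} (hlam : lam ≠ 0) (x : ℝ) {v : ℝ} (hv : v ≠ 0) :
    HasDerivAt (driftPrimitive lam x) (2 * gaussDensity 1 (lam * v - x / v) 0) v := by
  have hdiv : HasDerivAt (fun v => x / v) (-(x / v ^ 2)) v := by
    simpa [div_eq_mul_inv] using (hasDerivAt_inv hv).const_mul x
  have h₁ := (hasDerivAt_normalIntegral _).comp v (((hasDerivAt_id v).const_mul lam).sub hdiv)
  have h₂ := (hasDerivAt_normalIntegral _).comp v (((hasDerivAt_id v).const_mul (-lam)).sub hdiv)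
  refine ((h₁.sub (h₂.const_mul (exp (2 * lam * x)))).div_const lam).congr_deriv ?_
  simp only [Pi.sub_apply, id, ← mul_assoc, exp_mul_gaussDensity_reflect lam x hv]
  field_simp
  ring

lemma gaussDensity_eq_div_sqrt (lam x : ℝ) {u : ℝ} (hu : 0 < u) :
    gaussDensity u x (lam * u) = gaussDensity 1 (lam * √u - x / √u) 0 / √u := by
  have hsqrt : 0 < √u := sqrt_pos.2 hu
  conv_lhs => rw [← sq_sqrt hu.le]
  rw [gaussDensity, gaussDensity_one_zero, sqrt_mul (by positivity), sqrt_sq hsqrt.le, div_div]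
  congr 2
  field_simp
  ring

lemma hasDerivAt_driftPrimitive_sqrt {lam : ℝ} (hlam : lam ≠ 0) (x : ℝ) {u : ℝ} (hu : 0 < u) :
    HasDerivAt (fun u => driftPrimitive lam x √u) (gaussDensity u x (lam * u)) u := by
  have hsqrt : 0 < √u := sqrt_pos.2 hu
  refine ((hasDerivAt_driftPrimitive hlam x hsqrt.ne').comp u
    (hasDerivAt_sqrt hu.ne')).congr_deriv ?_
  rw [gaussDensity_eq_div_sqrt lam x hu]
  field_simp

lemma tendsto_driftPrimitive_atTop {lam : ℝ} (hlam : 0 < lam) (x : ℝ) :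
    Tendsto (driftPrimitive lam x) atTop (𝓝 ((1 + exp (2 * lam * x)) / (2 * lam))) := by
  have hdiv : Tendsto (fun v : ℝ => -(x / v)) atTop (𝓝 0) := by
    simpa using (tendsto_const_nhds.div_atTop (tendsto_id (x := (atTop : Filter ℝ)))).neg
  have h₁ : Tendsto (fun v => lam * v - x / v) atTop atTop := by
    simpa only [sub_eq_add_neg, id] using (tendsto_id.const_mul_atTop hlam).atTop_add hdiv
  have h₂ : Tendsto (fun v => -lam * v - x / v) atTop atBot := by
    simpa only [sub_eq_add_neg, id] using
      (tendsto_id.const_mul_atTop_of_neg (neg_neg_iff_pos.2 hlam)).atBot_add hdiv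
  have h := ((tendsto_normalIntegral_atTop.comp h₁).sub
    ((tendsto_normalIntegral_atBot.comp h₂).const_mul (exp (2 * lam * x)))).div_const lam
  rw [show (1 + exp (2 * lam * x)) / (2 * lam) =
    (1 / 2 - exp (2 * lam * x) * (-(1 / 2))) / lam by field_simp; ring]
  exact h

lemma tendsto_driftPrimitive_nhdsGT_zero (lam x : ℝ) :
    Tendsto (driftPrimitive lam x) (𝓝[>] 0)
      (𝓝 (Real.sign x * (exp (2 * lam * x) - 1) / (2 * lam))) := by
  have h := ((tendsto_normalIntegral_mul_sub_div_nhdsGT_zero lam x).sub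
    ((tendsto_normalIntegral_mul_sub_div_nhdsGT_zero (-lam) x).const_mul
      (exp (2 * lam * x)))).div_const lam
  rw [show Real.sign x * (exp (2 * lam * x) - 1) / (2 * lam) =
    (-Real.sign x / 2 - exp (2 * lam * x) * (-Real.sign x / 2)) / lam by field_simp; ring]
  exact h

lemma one_add_exp_sub_sign_mul_exp_sub_one {lam : ℝ} (hlam : lam ≠ 0) (x : ℝ) :
    (1 + exp (2 * lam * x)) / (2 * lam) - Real.sign x * (exp (2 * lam * x) - 1) / (2 * lam) =
      1 / lam * exp (-lam * (|x| - x)) := by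
  rcases lt_trichotomy x 0 with hx | rfl | hx
  · rw [Real.sign_of_neg hx, abs_of_neg hx]
    field_simp
    ring_nf
  · rw [Real.sign_zero, abs_zero]
    field_simp
    norm_num
  · rw [Real.sign_of_pos hx, abs_of_pos hx, sub_self, mul_zero, exp_zero]
    field_simp
    ring

theorem stmt_7_general (lam s x : ℝ) (hlam : 0 < lam) :
    ∫ r in Set.Ioi s, gaussDensity (r - s) x (lam * (r - s)) =
      (1 / lam) * Real.exp (-lam * (|x| - x)) := by
  have hsqrt_atTop : Tendsto (fun r => √(r - s)) atTop atTop :=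
    tendsto_sqrt_atTop.comp (tendsto_atTop_add_const_right _ (-s) tendsto_id)
  have hsqrt_nhdsGT : Tendsto (fun r => √(r - s)) (𝓝[>] s) (𝓝[>] 0) := by
    refine tendsto_nhdsWithin_iff.2 ⟨?_, eventually_nhdsWithin_of_forall fun r hr =>
      sqrt_pos.2 (sub_pos.2 hr)⟩
    simpa [Function.comp_def] using ((continuous_sqrt.comp (continuous_sub_right s)).tendsto s).mono_left
      nhdsWithin_le_nhds
  rw [integral_Ioi_of_hasDerivAt_of_nonneg_of_tendsto
    (fun r hr => (hasDerivAt_driftPrimitive_sqrt hlam.ne' x (sub_pos.2 hr)).comp_sub_const r s)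
    (fun r _ => by unfold gaussDensity; positivity)
    ((tendsto_driftPrimitive_nhdsGT_zero lam x).comp hsqrt_nhdsGT)
    ((tendsto_driftPrimitive_atTop hlam x).comp hsqrt_atTop)]
  exact one_add_exp_sub_sign_mul_exp_sub_one hlam.ne' x

theorem stmt_7 (lam s x : ℝ) (hlam : 0 < lam) (hs : 0 ≤ s) :
    ∫ r in Set.Ioi s, gaussDensity (r - s) x (lam * (r - s)) =
      (1 / lam) * Real.exp (-lam * (|x| - x)) :=
  stmt_7_general lam s x hlam
end
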